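/- arXiv:2603.15451 — 6 statements merged into one kernel-verified Lean document; each statement's English description precedes it below -/
import Mathlib

section
/- In the general quantized rational chip-firing model, firing any nonempty set strictly decreases the total chip count: for every chip configuration D : [n] → ℤ and every nonempty subset S ⊆ [n], one has Σ_{i∈[n]} φ_S(D)(i) < Σ_{i∈[n]} D(i). -/
/-- Number of non-sink neighbors of `i` (in the graph `G` on the `n` non-sink
vertices) lying in `X`. -/
def degIn {n : ℕ} (G : SimpleGraph (Fin n)) [DecidableRel G.Adj]
    (X : Finset (Fin n)) (i : Fin n) : ℕ :=
  (X.filter fun j => G.Adj i j).card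

/-- The quantized cluster-fire move `φ_S` (parameters `a, b, c`): every `i ∈ S`
loses `c + ⌊deg_{Sᶜ}(i)·a/b⌋` chips and every `j ∉ S` gains `⌊deg_S(j)·a/b⌋`. -/
def gfire {n : ℕ} (a b c : ℕ) (G : SimpleGraph (Fin n)) [DecidableRel G.Adj]
    (S : Finset (Fin n)) (D : Fin n → ℤ) : Fin n → ℤ :=
  fun i =>
    if i ∈ S then D i - (c : ℤ) - ((degIn G Sᶜ i * a / b : ℕ) : ℤ)
    else D i + ((degIn G S i * a / b : ℕ) : ℤ)

/-!
Firing `S` moves `⌊deg_S(j)·a/b⌋` chips onto each `j ∉ S` and removes `c + ⌊deg_{Sᶜ}(i)·a/b⌋`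
from each `i ∈ S`. Before rounding, both flows equal `a/b` times the number of edges between `S`
and `Sᶜ`. Rounding down can only shrink the inflow, and it shrinks the outflow by less than one
chip per vertex of `S`. Each vertex of `S` also loses at least `c ≥ 1` chips, so more chips leave
than arrive.
-/

open Finset

theorem Finset.sum_nat_div_le_sum_div {ι : Type*} (s : Finset ι) (f : ι → ℕ) (b : ℕ) :
    ∑ i ∈ s, f i / b ≤ (∑ i ∈ s, f i) / b := by
  induction s using Finset.cons_induction with
  | empty => simp
  | cons i s hi ih =>
    rw [sum_cons, sum_cons]
    exact (Nat.add_le_add_left ih _).trans Nat.div_add_div_le_add_div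

theorem Finset.sum_div_lt_sum_nat_div_add_card {ι : Type*} {s : Finset ι} (hs : s.Nonempty)
    (f : ι → ℕ) (b : ℕ) :
    (∑ i ∈ s, f i) / b < ∑ i ∈ s, f i / b + #s := by
  rcases Nat.eq_zero_or_pos b with rfl | hb
  · simpa using hs.card_pos
  rw [Nat.div_lt_iff_lt_mul hb]
  calc ∑ i ∈ s, f i < ∑ i ∈ s, (f i / b * b + b) :=
        sum_lt_sum_of_nonempty hs fun i _ => Nat.lt_div_mul_add hb
    _ = (∑ i ∈ s, f i / b + #s) * b := by
        rw [sum_add_distrib, sum_const, smul_eq_mul, ← sum_mul, add_mul]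

theorem sum_degIn_comm {n : ℕ} (G : SimpleGraph (Fin n)) [DecidableRel G.Adj]
    (X Y : Finset (Fin n)) :
    ∑ j ∈ Y, degIn G X j = ∑ i ∈ X, degIn G Y i := by
  simp only [degIn, card_filter]
  rw [sum_comm]
  simp only [G.adj_comm]

theorem sum_gfire {n : ℕ} (a b c : ℕ) (G : SimpleGraph (Fin n)) [DecidableRel G.Adj]
    (S : Finset (Fin n)) (D : Fin n → ℤ) :
    ∑ i, gfire a b c G S D i = ∑ i, D i - c * #S - ∑ i ∈ S, ((degIn G Sᶜ i * a / b : ℕ) : ℤ)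
      + ∑ j ∈ Sᶜ, ((degIn G S j * a / b : ℕ) : ℤ) := by
  rw [← S.sum_add_sum_compl, ← S.sum_add_sum_compl D]
  unfold gfire
  rw [sum_congr rfl fun i hi => if_pos hi, sum_congr rfl fun j hj => if_neg (mem_compl.1 hj)]
  simp only [sum_sub_distrib, sum_add_distrib, sum_const, nsmul_eq_mul]
  ring

theorem fire_decreases_total_general (n a b c : ℕ) (hc : 0 < c) (G : SimpleGraph (Fin n))
    [DecidableRel G.Adj] (D : Fin n → ℤ) (S : Finset (Fin n)) (hS : S.Nonempty) :
    ∑ i, gfire a b c G S D i < ∑ i, D i := by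
  have hflow : ∑ j ∈ Sᶜ, degIn G S j * a / b < ∑ i ∈ S, degIn G Sᶜ i * a / b + c * #S :=
    calc ∑ j ∈ Sᶜ, degIn G S j * a / b ≤ (∑ j ∈ Sᶜ, degIn G S j * a) / b :=
          sum_nat_div_le_sum_div _ _ _
      _ = (∑ i ∈ S, degIn G Sᶜ i * a) / b := by rw [← sum_mul, ← sum_mul, sum_degIn_comm]
      _ < ∑ i ∈ S, degIn G Sᶜ i * a / b + #S := sum_div_lt_sum_nat_div_add_card hS _ _
      _ ≤ ∑ i ∈ S, degIn G Sᶜ i * a / b + c * #S := by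
          gcongr; exact Nat.le_mul_of_pos_left _ hc
  rw [sum_gfire]
  have hflowZ : ((∑ j ∈ Sᶜ, degIn G S j * a / b : ℕ) : ℤ)
      < ((∑ i ∈ S, degIn G Sᶜ i * a / b + c * #S : ℕ) : ℤ) := by exact_mod_cast hflow
  push_cast at hflowZ ⊢
  linarith

/-- firing any nonempty set strictly decreases the total chip
count. -/
theorem fire_decreases_total (n a b c : ℕ) (hn : 0 < n) (ha : 0 < a) (hb : 0 < b)
    (hc : 0 < c) (G : SimpleGraph (Fin n)) [DecidableRel G.Adj]
    (D : Fin n → ℤ) (S : Finset (Fin n)) (hS : S.Nonempty) :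
    ∑ i, gfire a b c G S D i < ∑ i, D i :=
  fire_decreases_total_general n a b c hc G D S hS
end

section
/- In the general quantized rational chip-firing model, for any graph G (as in the model) and any chip configuration D ≥ 0, D has exactly one 0-stabilization: every maximal sequence of legal single-vertex firing moves starting from D terminates, and all such sequences end at the same 0-stable configuration. -/
/-- One legal `k`-firing move: `D ≥ 0`, some nonempty `S` with `|S| ≤ k+1`
fires, and the result is nonnegative. -/
def gLegalKStep {n : ℕ} (a b c k : ℕ) (G : SimpleGraph (Fin n)) [DecidableRel G.Adj]
    (D D' : Fin n → ℤ) : Prop :=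
  (∀ i, 0 ≤ D i) ∧ ∃ S : Finset (Fin n), S.Nonempty ∧ S.card ≤ k + 1 ∧
    D' = gfire a b c G S D ∧ (∀ i, 0 ≤ D' i)

/-- `D` is `k`-stable: `D ≥ 0` and no `k`-firing move is legal on `D`. -/
def gKStable {n : ℕ} (a b c k : ℕ) (G : SimpleGraph (Fin n)) [DecidableRel G.Adj]
    (D : Fin n → ℤ) : Prop :=
  (∀ i, 0 ≤ D i) ∧ ∀ S : Finset (Fin n), S.Nonempty → S.card ≤ k + 1 →
    ¬ (∀ i, 0 ≤ gfire a b c G S D i)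

open Finset Relation

section NormalForm

variable {α : Type*} {r : α → α → Prop}

theorem Relation.ReflTransGen.eq_of_forall_not_rel {x y : α} (h : ReflTransGen r x y)
    (hx : ∀ z, ¬ r x z) : x = y := by
  rcases h.cases_head with rfl | ⟨z, hxz, -⟩
  · rfl
  · exact absurd hxz (hx z)

theorem existsUnique_normalForm (hwf : WellFounded (flip r))
    (hdiamond : ∀ a b c, r a b → r a c → ∃ d, ReflGen r b d ∧ ReflTransGen r c d) (x : α) :
    ∃! y, ReflTransGen r x y ∧ ∀ z, ¬ r y z := by
  obtain ⟨y, hxy, hmin⟩ := hwf.has_min {y | ReflTransGen r x y} ⟨x, .refl⟩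
  have hy : ∀ z, ¬ r y z := fun z hyz => hmin z (hxy.tail hyz) hyz
  refine ⟨y, ⟨hxy, hy⟩, ?_⟩
  rintro y' ⟨hxy', hy'⟩
  obtain ⟨w, hy'w, hyw⟩ := church_rosser hdiamond hxy' hxy
  rw [hy'w.eq_of_forall_not_rel hy', hyw.eq_of_forall_not_rel hy]

end NormalForm

variable {n : ℕ} {a b c k : ℕ} {G : SimpleGraph (Fin n)} [DecidableRel G.Adj]

theorem gfire_eq_add (S : Finset (Fin n)) (D : Fin n → ℤ) :
    gfire a b c G S D = D + gfire a b c G S 0 := by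
  funext i
  simp only [gfire, Pi.add_apply, Pi.zero_apply]
  split_ifs <;> ring

theorem gfire_comm (S T : Finset (Fin n)) (D : Fin n → ℤ) :
    gfire a b c G S (gfire a b c G T D) = gfire a b c G T (gfire a b c G S D) := by
  rw [gfire_eq_add S (gfire a b c G T D), gfire_eq_add T D, gfire_eq_add T (gfire a b c G S D),
    gfire_eq_add S D, add_right_comm]

theorem le_gfire_of_notMem {S : Finset (Fin n)} {i : Fin n} (hi : i ∉ S) (D : Fin n → ℤ) :
    D i ≤ gfire a b c G S D i := by
  simp only [gfire, if_neg hi]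
  exact le_add_of_nonneg_right (Int.natCast_nonneg _)

theorem gfire_singleton_zero_apply (v i : Fin n) :
    gfire a b c G {v} 0 i =
      (if i = v then -(c : ℤ) - ((degIn G univ v * a / b : ℕ) : ℤ) else 0) +
        if G.Adj v i then ((a / b : ℕ) : ℤ) else 0 := by
  by_cases hiv : i = v
  · subst hiv
    have : degIn G {i}ᶜ i = degIn G univ i := by
      simp only [degIn]
      congr 1
      ext j
      simp only [mem_filter, mem_compl, mem_singleton, mem_univ, true_and, and_iff_right_iff_imp]
      exact fun h => (G.ne_of_adj h).symm
    simp [gfire, this]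
  · have : degIn G {v} i = if G.Adj v i then 1 else 0 := by
      simp only [degIn, filter_singleton, G.adj_comm i v]
      split_ifs <;> rfl
    simp only [gfire, mem_singleton, hiv, if_false, Pi.zero_apply, this, ite_mul, one_mul,
      zero_mul, zero_add]
    split_ifs <;> simp

theorem sum_gfire_singleton_le (v : Fin n) (D : Fin n → ℤ) :
    ∑ i, gfire a b c G {v} D i ≤ ∑ i, D i - c := by
  have hfloor :
      (degIn G univ v : ℤ) * ((a / b : ℕ) : ℤ) ≤ ((degIn G univ v * a / b : ℕ) : ℤ) := by
    exact_mod_cast Nat.mul_div_le_mul_div_assoc _ _ _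
  rw [gfire_eq_add]
  simp only [Pi.add_apply, sum_add_distrib, gfire_singleton_zero_apply, sum_ite_eq',
    mem_univ, if_true, ← sum_filter, sum_const, nsmul_eq_mul]
  change _ + (_ + (degIn G univ v : ℤ) * _) ≤ _
  linarith

theorem gLegalKStep.nonneg_right {D D' : Fin n → ℤ} (h : gLegalKStep a b c k G D D') :
    ∀ i, 0 ≤ D' i := by
  obtain ⟨-, -, -, -, -, hD'⟩ := h
  exact hD'

theorem Relation.ReflTransGen.nonneg_of_gLegalKStep {D D' : Fin n → ℤ}
    (h : ReflTransGen (gLegalKStep a b c k G) D D') (hD : ∀ i, 0 ≤ D i) : ∀ i, 0 ≤ D' i := by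
  induction h with
  | refl => exact hD
  | tail _ hstep _ => exact hstep.nonneg_right

theorem gKStable_iff {D : Fin n → ℤ} :
    gKStable a b c k G D ↔ (∀ i, 0 ≤ D i) ∧ ∀ D', ¬ gLegalKStep a b c k G D D' := by
  constructor
  · rintro ⟨hD, hst⟩
    exact ⟨hD, fun D' ⟨_, S, hne, hcard, hD', hpos⟩ => hst S hne hcard (hD' ▸ hpos)⟩
  · rintro ⟨hD, hno⟩
    exact ⟨hD, fun S hne hcard hpos => hno _ ⟨hD, S, hne, hcard, rfl, hpos⟩⟩

theorem gLegalKStep_zero_iff {D D' : Fin n → ℤ} :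
    gLegalKStep a b c 0 G D D' ↔
      (∀ i, 0 ≤ D i) ∧ ∃ v, D' = gfire a b c G {v} D ∧ ∀ i, 0 ≤ D' i := by
  constructor
  · rintro ⟨hD, S, hne, hcard, rfl, hpos⟩
    obtain ⟨v, rfl⟩ := card_eq_one.mp (le_antisymm hcard hne.card_pos)
    exact ⟨hD, v, rfl, hpos⟩
  · rintro ⟨hD, v, rfl, hpos⟩
    exact ⟨hD, {v}, singleton_nonempty v, (card_singleton v).le, rfl, hpos⟩

theorem gLegalKStep_zero_diamond (D D₁ D₂ : Fin n → ℤ) (h₁ : gLegalKStep a b c 0 G D D₁)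
    (h₂ : gLegalKStep a b c 0 G D D₂) :
    ∃ E, ReflGen (gLegalKStep a b c 0 G) D₁ E ∧ ReflTransGen (gLegalKStep a b c 0 G) D₂ E := by
  obtain ⟨-, v, rfl, h₁⟩ := gLegalKStep_zero_iff.mp h₁
  obtain ⟨-, w, rfl, h₂⟩ := gLegalKStep_zero_iff.mp h₂
  obtain rfl | hvw := eq_or_ne v w
  · exact ⟨_, .refl, .refl⟩
  have hE : ∀ i, 0 ≤ gfire a b c G {w} (gfire a b c G {v} D) i := by
    intro i
    obtain rfl | hiw := eq_or_ne i w
    · rw [gfire_comm]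
      exact (h₂ i).trans (le_gfire_of_notMem (by simpa using hvw.symm) _)
    · exact (h₁ i).trans (le_gfire_of_notMem (by simpa using hiw) _)
  exact ⟨_, .single (gLegalKStep_zero_iff.mpr ⟨h₁, w, rfl, hE⟩),
    .single (gLegalKStep_zero_iff.mpr ⟨h₂, v, gfire_comm _ _ _, hE⟩)⟩

theorem wellFounded_flip_gLegalKStep_zero (hc : 0 < c) :
    WellFounded (flip (gLegalKStep a b c 0 G)) := by
  refine Subrelation.wf (fun {D' D} h => ?_) (measure fun D : Fin n → ℤ => (∑ i, D i).toNat).wf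
  obtain ⟨-, v, rfl, hpos⟩ := gLegalKStep_zero_iff.mp h
  have hsum := sum_gfire_singleton_le (a := a) (b := b) (c := c) (G := G) v D
  have hnonneg : 0 ≤ ∑ i, gfire a b c G {v} D i := sum_nonneg fun i _ => hpos i
  change (∑ i, gfire a b c G {v} D i).toNat < (∑ i, D i).toNat
  omega

theorem unique_zeroStabilization_general (n a b c : ℕ) (hc : 0 < c) (G : SimpleGraph (Fin n))
    [DecidableRel G.Adj] (D : Fin n → ℤ) (hD : ∀ i, 0 ≤ D i) :
    (∀ f : ℕ → (Fin n → ℤ), f 0 = D →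
      (∀ m, gLegalKStep a b c 0 G (f m) (f (m + 1))) → False) ∧
    (∃! D' : Fin n → ℤ,
      Relation.ReflTransGen (gLegalKStep a b c 0 G) D D' ∧ gKStable a b c 0 G D') := by
  have hwf := wellFounded_flip_gLegalKStep_zero (a := a) (b := b) (G := G) hc
  refine ⟨fun f _ hf => (wellFounded_iff_isEmpty_descending_chain.mp hwf).false ⟨f, hf⟩, ?_⟩
  refine (existsUnique_congr fun E => ?_).mp
    (existsUnique_normalForm hwf gLegalKStep_zero_diamond D)
  rw [gKStable_iff]
  exact and_congr_right fun hDE => (and_iff_right (hDE.nonneg_of_gLegalKStep hD)).symm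

/-- every maximal sequence of legal single-vertex firings from a
nonnegative `D` terminates, and `D` has exactly one `0`-stabilization. -/
theorem unique_zeroStabilization (n a b c : ℕ) (hn : 0 < n) (ha : 0 < a)
    (hb : 0 < b) (hc : 0 < c) (G : SimpleGraph (Fin n)) [DecidableRel G.Adj]
    (D : Fin n → ℤ) (hD : ∀ i, 0 ≤ D i) :
    (∀ f : ℕ → (Fin n → ℤ), f 0 = D →
      (∀ m, gLegalKStep a b c 0 G (f m) (f (m + 1))) → False) ∧
    (∃! D' : Fin n → ℤ,
      Relation.ReflTransGen (gLegalKStep a b c 0 G) D D' ∧ gKStable a b c 0 G D') :=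
  unique_zeroStabilization_general n a b c hc G D hD
end

section
/- Let a, b be coprime positive integers. Every equivalence class of the cyclic-shift relation ∼ on P(N^b E^a) has exactly a+b elements and contains exactly one (a,b)-Dyck path. Consequently, the number of (a,b)-Dyck paths equals the rational Catalan number Cat(a,b). -/
/-!
Along a path the level rises by `a` at a north step, drops by `b` at an east step, and is `0` at
both ends, so the levels of `P.rotate m` are the levels of `P` read cyclically from position `m`,
shifted down by the level at `m`. Hence `P.rotate m` is Dyck iff `m` is a position of minimal
level. The level after `m` steps is `(a + b)·y - b·m` and `a + b` is coprime to `b`, so the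
`a + b` positions have distinct levels: the minimum is attained exactly once, and distinct
positions give distinct rotations. Each class is thus `a + b` rotations containing one Dyck path,
and `(a + b).choose b = (a + b) · #Dyck`.
-/

/-- A lattice path is a list of steps, `true` = north step, `false` = east step.
`Q` is a path from `(0,0)` to `(a,b)` iff it has `b` norths and `a` easts. -/
def IsPath (a b : ℕ) (Q : List Bool) : Prop :=
  Q.count true = b ∧ Q.count false = a

/-- Level `a·y − b·x` of the lattice point reached after the first `m` steps. -/
def lvlAt (a b : ℕ) (Q : List Bool) (m : ℕ) : ℤ :=
  (a : ℤ) * ((Q.take m).count true : ℤ) - (b : ℤ) * ((Q.take m).count false : ℤ)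

/-- Condition (R1): the last `k+1` north steps of `Q` start at nonnegative
level (a north step at index `m` is among the last `k+1` norths iff at most `k`
norths occur strictly after it). -/
def R1 (a b k : ℕ) (Q : List Bool) : Prop :=
  ∀ m < Q.length, Q.getD m false = true → (Q.drop (m + 1)).count true ≤ k →
    0 ≤ lvlAt a b Q m

/-- `Q` is an `(a,b)`-Dyck path: every north step starts at nonnegative level. -/
def IsDyck (a b : ℕ) (Q : List Bool) : Prop :=
  ∀ m < Q.length, Q.getD m false = true → 0 ≤ lvlAt a b Q m

/-- `Q` is `k`-skeletal: (R1) holds, and (R2) every cyclic shift of `Q` at a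
lattice point of positive level fails (R1).  (The cyclic shift of `Q` at the
point reached after `m` steps is `Q.rotate m`.) -/
def SkeletalPath (a b k : ℕ) (Q : List Bool) : Prop :=
  R1 a b k Q ∧ ∀ m ≤ Q.length, 0 < lvlAt a b Q m → ¬ R1 a b k (Q.rotate m)

lemma Nat.Coprime.add_pos {a b : ℕ} (hab : a.Coprime b) : 0 < a + b :=
  Nat.pos_of_ne_zero fun h => by simp_all [Nat.add_eq_zero_iff]

lemma List.IsRotated.exists_lt_length_rotate_eq {α : Type*} {l l' : List α} (h : l ~r l')
    (hl : 0 < l.length) : ∃ m < l.length, l.rotate m = l' := by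
  obtain ⟨m, rfl⟩ := h
  exact ⟨m % l.length, Nat.mod_lt _ hl, List.rotate_mod _ _⟩

lemma List.exists_le_length_rotate_eq_iff_isRotated {α : Type*} {l l' : List α} :
    (∃ m ≤ l.length, l' = l.rotate m) ↔ l ~r l' := by
  simp only [List.isRotated_iff_mod, eq_comm]

def lvl (a b : ℕ) (l : List Bool) : ℤ :=
  a * l.count true - b * l.count false

section Levels

variable {a b : ℕ}

lemma lvlAt_eq_lvl_take (Q : List Bool) (m : ℕ) : lvlAt a b Q m = lvl a b (Q.take m) := rfl

lemma lvl_append (l₁ l₂ : List Bool) : lvl a b (l₁ ++ l₂) = lvl a b l₁ + lvl a b l₂ := by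
  simp only [lvl, List.count_append]
  push_cast
  ring

lemma lvl_singleton_false : lvl a b [false] = -b := by
  simp [lvl]

lemma lvlAt_zero (Q : List Bool) : lvlAt a b Q 0 = 0 := by
  simp [lvlAt]

lemma lvlAt_of_length_le {Q : List Bool} {m : ℕ} (h : Q.length ≤ m) :
    lvlAt a b Q m = lvl a b Q := by
  rw [lvlAt_eq_lvl_take, List.take_of_length_le h]

lemma lvlAt_append (l₁ l₂ : List Bool) (m : ℕ) :
    lvlAt a b (l₁ ++ l₂) m = lvlAt a b l₁ m + lvlAt a b l₂ (m - l₁.length) := by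
  simp only [lvlAt_eq_lvl_take, List.take_append, lvl_append]

lemma lvlAt_drop (Q : List Bool) (m j : ℕ) :
    lvlAt a b (Q.drop m) j = lvlAt a b Q (m + j) - lvlAt a b Q m := by
  simp only [lvlAt_eq_lvl_take, List.take_add, lvl_append]
  ring

lemma lvlAt_take {Q : List Bool} {j m : ℕ} (h : j ≤ m) :
    lvlAt a b (Q.take m) j = lvlAt a b Q j := by
  rw [lvlAt_eq_lvl_take, List.take_take, min_eq_left h, lvlAt_eq_lvl_take]

lemma lvlAt_succ {Q : List Bool} {m : ℕ} (hm : m < Q.length) :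
    lvlAt a b Q (m + 1) = lvlAt a b Q m + lvl a b [Q.getD m false] := by
  rw [lvlAt_eq_lvl_take, List.take_add_one, lvl_append, List.getElem?_eq_getElem hm,
    List.getD_eq_getElem _ _ hm]
  rfl

lemma lvlAt_eq_mul_count_sub {Q : List Bool} {m : ℕ} (hm : m ≤ Q.length) :
    lvlAt a b Q m = (a + b) * (Q.take m).count true - b * m := by
  have hm' := List.count_true_add_count_false (Q.take m)
  rw [List.length_take, min_eq_left hm] at hm'
  rw [lvlAt, show ((Q.take m).count false : ℤ) = m - (Q.take m).count true by omega]
  ring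

lemma isDyck_iff_forall_lvlAt_nonneg {Q : List Bool} (hQ : 0 ≤ lvlAt a b Q Q.length) :
    IsDyck a b Q ↔ ∀ j ≤ Q.length, 0 ≤ lvlAt a b Q j := by
  refine ⟨fun hD j hj => ?_, fun h m hm _ => h m hm.le⟩
  induction hj using Nat.decreasingInduction with
  | self => exact hQ
  | of_succ k hk ih =>
    by_cases hN : Q.getD k false = true
    · exact hD k hk hN
    · rw [lvlAt_succ hk, Bool.of_not_eq_true hN, lvl_singleton_false] at ih
      omega

end Levels

def cycLvl (a b : ℕ) (P : List Bool) (x : ℕ) : ℤ :=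
  lvlAt a b P (x % P.length)

section Paths

variable {a b : ℕ} {P : List Bool}

lemma cycLvl_mod (x : ℕ) : cycLvl a b P (x % P.length) = cycLvl a b P x := by
  rw [cycLvl, Nat.mod_mod, cycLvl]

lemma cycLvl_add_length (x : ℕ) : cycLvl a b P (x + P.length) = cycLvl a b P x := by
  rw [cycLvl, Nat.add_mod_right, cycLvl]

lemma cycLvl_of_lt {x : ℕ} (hx : x < P.length) : cycLvl a b P x = lvlAt a b P x := by
  rw [cycLvl, Nat.mod_eq_of_lt hx]

lemma exists_cycLvl_add_eq {m : ℕ} (hm : m < P.length) (x : ℕ) :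
    ∃ j < P.length, cycLvl a b P (m + j) = cycLvl a b P x := by
  have hx : x % P.length < P.length := Nat.mod_lt _ (by omega)
  rcases le_or_gt m (x % P.length) with h | h
  · exact ⟨x % P.length - m, by omega, by rw [Nat.add_sub_cancel' h, cycLvl_mod]⟩
  · refine ⟨x % P.length + P.length - m, by omega, ?_⟩
    rw [show m + (x % P.length + P.length - m) = x % P.length + P.length by omega,
      cycLvl_add_length, cycLvl_mod]

lemma exists_forall_cycLvl_le (hP : 0 < P.length) :
    ∃ m < P.length, ∀ x, cycLvl a b P m ≤ cycLvl a b P x := by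
  obtain ⟨m, hm, hmin⟩ := (Finset.range P.length).exists_min_image (cycLvl a b P)
    ⟨0, Finset.mem_range.mpr hP⟩
  refine ⟨m, Finset.mem_range.mp hm, fun x => ?_⟩
  rw [← cycLvl_mod x]
  exact hmin _ (Finset.mem_range.mpr (Nat.mod_lt _ hP))

lemma IsPath.length_eq (hP : IsPath a b P) : P.length = a + b := by
  rw [← List.count_true_add_count_false, hP.1, hP.2, add_comm]

lemma IsPath.length_pos (hab : a.Coprime b) (hP : IsPath a b P) : 0 < P.length := by
  rw [hP.length_eq]
  exact hab.add_pos

lemma IsPath.lvl_eq_zero (hP : IsPath a b P) : lvl a b P = 0 := by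
  rw [lvl, hP.1, hP.2]
  ring

lemma IsPath.rotate (hP : IsPath a b P) (m : ℕ) : IsPath a b (P.rotate m) := by
  simpa only [IsPath, (P.rotate_perm m).count_eq] using hP

lemma IsPath.lvlAt_rotate (hP : IsPath a b P) {m j : ℕ} (hm : m < P.length) (hj : j ≤ P.length) :
    lvlAt a b (P.rotate m) j = cycLvl a b P (m + j) - cycLvl a b P m := by
  rw [List.rotate_eq_drop_append_take hm.le, lvlAt_append, lvlAt_drop, List.length_drop,
    lvlAt_take (by omega), cycLvl_of_lt hm, cycLvl]
  rcases lt_or_ge (m + j) P.length with h | h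
  · rw [Nat.mod_eq_of_lt h, Nat.sub_eq_zero_of_le (by omega), lvlAt_zero]
    ring
  · rw [lvlAt_of_length_le h, hP.lvl_eq_zero, Nat.mod_eq_sub_mod h, Nat.mod_eq_of_lt (by omega),
      show j - (P.length - m) = m + j - P.length by omega]
    ring

lemma IsPath.lvlAt_injOn (hab : a.Coprime b) (hP : IsPath a b P) :
    Set.InjOn (lvlAt a b P) (Set.Iio P.length) := by
  intro i (hi : i < P.length) j (hj : j < P.length) h
  rw [lvlAt_eq_mul_count_sub hi.le, lvlAt_eq_mul_count_sub hj.le] at h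
  have hcop : IsCoprime ((a : ℤ) + b) b := by
    exact_mod_cast Nat.isCoprime_iff_coprime.mpr (Nat.coprime_add_self_left.mpr hab)
  have hdvd : ((a : ℤ) + b) ∣ i - j := hcop.dvd_of_dvd_mul_left
    ⟨(P.take i).count true - (P.take j).count true, by linear_combination -h⟩
  have hlt : |(i : ℤ) - j| < a + b := by
    rw [abs_sub_lt_iff, ← Nat.cast_add, ← hP.length_eq]
    omega
  exact_mod_cast sub_eq_zero.mp (Int.eq_zero_of_abs_lt_dvd hdvd hlt)

lemma IsPath.isDyck_rotate_iff (hP : IsPath a b P) {m : ℕ} (hm : m < P.length) :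
    IsDyck a b (P.rotate m) ↔ ∀ x, cycLvl a b P m ≤ cycLvl a b P x := by
  rw [isDyck_iff_forall_lvlAt_nonneg (by rw [lvlAt_of_length_le le_rfl, (hP.rotate m).lvl_eq_zero]),
    List.length_rotate]
  constructor
  · intro h x
    obtain ⟨j, hj, hjx⟩ := exists_cycLvl_add_eq hm x
    have := h j hj.le
    rw [hP.lvlAt_rotate hm hj.le, hjx] at this
    linarith
  · intro h j hj
    rw [hP.lvlAt_rotate hm hj]
    linarith [h (m + j)]

/-- The lowest level of `P.rotate i` is `min cycLvl - cycLvl i`, so the rotation determines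
`cycLvl i`. -/
lemma IsPath.cycLvl_le_of_rotate_eq (hP : IsPath a b P) {i j : ℕ} (hi : i < P.length)
    (hj : j < P.length) (h : P.rotate i = P.rotate j) : cycLvl a b P i ≤ cycLvl a b P j := by
  obtain ⟨m₀, -, hmin⟩ := exists_forall_cycLvl_le (a := a) (b := b) (by omega : 0 < P.length)
  obtain ⟨t, ht, hit⟩ := exists_cycLvl_add_eq (a := a) (b := b) hi m₀
  have := hP.lvlAt_rotate hj ht.le
  rw [← h, hP.lvlAt_rotate hi ht.le, hit] at this
  linarith [hmin (j + t)]

lemma IsPath.rotate_injOn (hab : a.Coprime b) (hP : IsPath a b P) :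
    Set.InjOn P.rotate (Set.Iio P.length) := by
  intro i (hi : i < P.length) j (hj : j < P.length) h
  apply hP.lvlAt_injOn hab hi hj
  rw [← cycLvl_of_lt hi, ← cycLvl_of_lt hj]
  exact le_antisymm (hP.cycLvl_le_of_rotate_eq hi hj h) (hP.cycLvl_le_of_rotate_eq hj hi h.symm)

lemma IsPath.ncard_isRotated (hab : a.Coprime b) (hP : IsPath a b P) :
    {Q | P ~r Q}.ncard = P.length := by
  have : {Q | P ~r Q} = P.rotate '' Set.Iio P.length := by
    ext Q
    exact ⟨fun h => h.exists_lt_length_rotate_eq (hP.length_pos hab),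
      fun ⟨m, _, hm⟩ => ⟨m, hm⟩⟩
  rw [this, (hP.rotate_injOn hab).ncard_image, ← Finset.coe_Iio, Set.ncard_coe_finset, Nat.card_Iio]

lemma IsPath.existsUnique_isRotated_isDyck (hab : a.Coprime b) (hP : IsPath a b P) :
    ∃! Q, P ~r Q ∧ IsDyck a b Q := by
  obtain ⟨m₀, hm₀, hmin⟩ := exists_forall_cycLvl_le (a := a) (b := b) (hP.length_pos hab)
  refine ⟨P.rotate m₀, ⟨⟨m₀, rfl⟩, (hP.isDyck_rotate_iff hm₀).mpr hmin⟩, ?_⟩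
  rintro Q ⟨hPQ, hQ⟩
  obtain ⟨m, hm, rfl⟩ := hPQ.exists_lt_length_rotate_eq (hP.length_pos hab)
  rw [hP.isDyck_rotate_iff hm] at hQ
  congr 1
  apply hP.lvlAt_injOn hab hm hm₀
  rw [← cycLvl_of_lt hm, ← cycLvl_of_lt hm₀]
  exact le_antisymm (hQ m₀) (hmin m)

end Paths

section Counting

variable {a b : ℕ}

lemma isPath_zero_left_iff {Q : List Bool} : IsPath 0 b Q ↔ Q = List.replicate b true := by
  constructor
  · rintro ⟨hN, hE⟩
    rw [List.eq_replicate_iff, ← hN, ← List.count_true_add_count_false, hE, add_zero]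
    exact ⟨rfl, fun x hx => by cases x <;> simp_all [List.count_eq_zero]⟩
  · rintro rfl
    simp [IsPath, List.count_replicate]

lemma isPath_zero_right_iff {Q : List Bool} : IsPath a 0 Q ↔ Q = List.replicate a false := by
  constructor
  · rintro ⟨hN, hE⟩
    rw [List.eq_replicate_iff, ← hE, ← List.count_false_add_count_true, hN, add_zero]
    exact ⟨rfl, fun x hx => by cases x <;> simp_all [List.count_eq_zero]⟩
  · rintro rfl
    simp [IsPath, List.count_replicate]

lemma setOf_isPath_succ_succ (a b : ℕ) :
    {Q | IsPath (a + 1) (b + 1) Q} =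
      List.cons true '' {Q | IsPath (a + 1) b Q} ∪ List.cons false '' {Q | IsPath a (b + 1) Q} := by
  ext (_ | ⟨_ | _, Q⟩) <;> simp [IsPath]

lemma finite_setOf_isPath (a b : ℕ) : {Q | IsPath a b Q}.Finite :=
  (List.finite_length_eq Bool (a + b)).subset fun _ hQ => hQ.length_eq

lemma ncard_setOf_isPath : ∀ a b : ℕ, {Q | IsPath a b Q}.ncard = (a + b).choose b
  | 0, b => by simp [isPath_zero_left_iff]
  | a + 1, 0 => by simp [isPath_zero_right_iff]
  | a + 1, b + 1 => by
    have hdisj : Disjoint (List.cons true '' {Q | IsPath (a + 1) b Q})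
        (List.cons false '' {Q | IsPath a (b + 1) Q}) := by
      simp [Set.disjoint_left]
    rw [setOf_isPath_succ_succ, Set.ncard_union_eq hdisj ((finite_setOf_isPath _ _).image _)
        ((finite_setOf_isPath _ _).image _), Set.ncard_image_of_injective _ List.cons_injective,
      Set.ncard_image_of_injective _ List.cons_injective, ncard_setOf_isPath (a + 1) b,
      ncard_setOf_isPath a (b + 1), show a + 1 + (b + 1) = a + 1 + b + 1 by ring,
      Nat.choose_succ_succ', show a + 1 + b = a + (b + 1) by ring]

lemma ncard_setOf_isPath_eq_mul (hab : a.Coprime b) :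
    {Q | IsPath a b Q}.ncard = {Q | IsPath a b Q ∧ IsDyck a b Q}.ncard * (a + b) := by
  have hbij : Set.BijOn (fun p : List Bool × ℕ => p.1.rotate p.2)
      ({Q | IsPath a b Q ∧ IsDyck a b Q} ×ˢ Set.Iio (a + b)) {Q | IsPath a b Q} := by
    refine ⟨fun p hp => hp.1.1.rotate p.2, ?_, ?_⟩
    · rintro ⟨Q, i⟩ ⟨⟨hQ, hQD⟩, hi⟩ ⟨Q', j⟩ ⟨⟨-, hQ'D⟩, hj⟩ (h : Q.rotate i = Q'.rotate j)
      have hQQ' : Q ~r Q' :=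
        List.IsRotated.trans ⟨i, rfl⟩ (List.IsRotated.symm (h ▸ ⟨j, rfl⟩ : Q' ~r Q.rotate i))
      obtain rfl : Q' = Q := (hQ.existsUnique_isRotated_isDyck hab).unique ⟨hQQ', hQ'D⟩
        ⟨List.IsRotated.refl Q, hQD⟩
      rw [Set.mem_Iio, ← hQ.length_eq] at hi hj
      exact Prod.ext rfl (hQ.rotate_injOn hab hi hj h)
    · intro P hP
      obtain ⟨W, ⟨⟨m, rfl⟩, hW⟩, -⟩ := hP.existsUnique_isRotated_isDyck hab
      obtain ⟨k, hk, hWk⟩ := (List.IsRotated.symm ⟨m, rfl⟩).exists_lt_length_rotate_eq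
        ((hP.rotate m).length_pos hab)
      exact ⟨(P.rotate m, k), ⟨⟨hP.rotate m, hW⟩, (hP.rotate m).length_eq ▸ hk⟩, hWk⟩
  rw [← hbij.image_eq, hbij.injOn.ncard_image, Set.ncard_prod, ← Finset.coe_Iio,
    Set.ncard_coe_finset, Nat.card_Iio]

end Counting

theorem cyclic_classes_and_dyck_count_general (a b : ℕ) (hab : a.Coprime b) :
    (∀ P : List Bool, IsPath a b P →
      {Q : List Bool | ∃ m ≤ P.length, Q = P.rotate m}.ncard = a + b ∧
      (∃! Q : List Bool, (∃ m ≤ P.length, Q = P.rotate m) ∧ IsDyck a b Q)) ∧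
    {Q : List Bool | IsPath a b Q ∧ IsDyck a b Q}.ncard =
      (a + b).factorial / (a.factorial * b.factorial * (a + b)) := by
  simp only [List.exists_le_length_rotate_eq_iff_isRotated]
  refine ⟨fun P hP => ⟨hP.length_eq ▸ hP.ncard_isRotated hab,
    hP.existsUnique_isRotated_isDyck hab⟩, ?_⟩
  refine (Nat.div_eq_of_eq_mul_left
    (Nat.mul_pos (Nat.mul_pos a.factorial_pos b.factorial_pos) hab.add_pos) ?_).symm
  rw [← Nat.choose_mul_factorial_mul_factorial (Nat.le_add_left b a), Nat.add_sub_cancel,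
    ← ncard_setOf_isPath, ncard_setOf_isPath_eq_mul hab]
  ring

/-- every cyclic-shift equivalence class in `P(N^b E^a)` has
exactly `a+b` elements and contains exactly one `(a,b)`-Dyck path; hence the
number of `(a,b)`-Dyck paths is the rational Catalan number. -/
theorem cyclic_classes_and_dyck_count (a b : ℕ) (ha : 0 < a) (hb : 0 < b)
    (hab : a.Coprime b) :
    (∀ P : List Bool, IsPath a b P →
      {Q : List Bool | ∃ m ≤ P.length, Q = P.rotate m}.ncard = a + b ∧
      (∃! Q : List Bool, (∃ m ≤ P.length, Q = P.rotate m) ∧ IsDyck a b Q)) ∧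
    {Q : List Bool | IsPath a b Q ∧ IsDyck a b Q}.ncard =
      (a + b).factorial / (a.factorial * b.factorial * (a + b)) :=
  cyclic_classes_and_dyck_count_general a b hab
end

section
/- Let a, b be coprime positive integers and fix k with 0 ≤ k < b. For every labeled path Q from (0,0) to (a,b) that ends in an east step, there is exactly one k-skeletal labeled path Q' that is a run-preserving cyclic shift of Q. -/
/-- A labeled path: `none` = east step, `some i` = north step labeled `i`.
It has `a` east steps, each label `1,…,b` exactly once, and labels increase
along each run of consecutive north steps. -/
def IsLabeled (a b : ℕ) (L : List (Option (Fin b))) : Prop :=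
  L.count none = a ∧ (∀ i : Fin b, L.count (some i) = 1) ∧
  ∀ m : ℕ, ∀ i j : Fin b, L.getD m none = some i → L.getD (m + 1) none = some j → i < j

/-- The underlying unlabeled path of a labeled path. -/
def unlabel {b : ℕ} (L : List (Option (Fin b))) : List Bool :=
  L.map Option.isSome

/-!
The levels of the `a + b` lattice points of a path from `(0,0)` to `(a,b)` are pairwise
distinct, because `lvl ≡ -b·m (mod a + b)` at the point reached after `m` steps and `b` is a
unit mod `a + b`. Cyclically shifting at a point `v` subtracts `lvl v` from all levels (read
cyclically), so the shifts satisfying (R1) form a nonempty set (the shift at the lowest point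
gives a Dyck path), and (R2) says exactly that the shift is taken at the highest point of this
set. Run-preserving shifts of a labeled path are plain rotations, because the path ends in an
east step, so a rotation never glues two runs of north steps together.
-/

def pathLevel (a b : ℕ) (l : List Bool) : ℤ :=
  a * l.count true - b * l.count false

section Levels

variable {a b : ℕ} {Q : List Bool}

lemma lvlAt_eq_pathLevel_take (a b : ℕ) (Q : List Bool) (m : ℕ) :
    lvlAt a b Q m = pathLevel a b (Q.take m) :=
  rfl

lemma pathLevel_append (a b : ℕ) (l₁ l₂ : List Bool) :
    pathLevel a b (l₁ ++ l₂) = pathLevel a b l₁ + pathLevel a b l₂ := by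
  simp only [pathLevel, List.count_append]
  push_cast
  ring

lemma IsPath.length_eq_s8 (hQ : IsPath a b Q) : Q.length = a + b := by
  rw [← List.count_true_add_count_false, hQ.1, hQ.2, add_comm]

lemma IsPath.pathLevel_eq_zero (hQ : IsPath a b Q) : pathLevel a b Q = 0 := by
  simp only [pathLevel, hQ.1, hQ.2]
  ring

lemma lvlAt_append_self (a b : ℕ) (Q : List Bool) (j : ℕ) :
    lvlAt a b (Q ++ Q) j = lvlAt a b Q j + lvlAt a b Q (j - Q.length) := by
  simp only [lvlAt_eq_pathLevel_take, List.take_append, pathLevel_append]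

lemma IsPath.lvlAt_append_self_eq_lvlAt_mod (hQ : IsPath a b Q) {j : ℕ} (hj : j < 2 * Q.length) :
    lvlAt a b (Q ++ Q) j = lvlAt a b Q (j % Q.length) := by
  rw [lvlAt_append_self]
  rcases lt_or_ge j Q.length with hlt | hge
  · rw [Nat.sub_eq_zero_of_le hlt.le, Nat.mod_eq_of_lt hlt]
    simp [lvlAt]
  · rw [Nat.mod_eq_sub_mod hge, Nat.mod_eq_of_lt (by omega), lvlAt_eq_pathLevel_take,
      List.take_of_length_le hge, hQ.pathLevel_eq_zero, zero_add]

lemma List.take_rotate_eq_take_drop_append_self {α : Type*} (l : List α) {m t : ℕ}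
    (hm : m ≤ l.length) (ht : t ≤ l.length) :
    (l.rotate m).take t = ((l ++ l).drop m).take t := by
  rw [List.rotate_eq_drop_append_take hm, List.drop_append_of_le_length hm, List.take_append,
    List.take_append, List.take_take, List.length_drop,
    min_eq_left (show t - (l.length - m) ≤ m by omega)]

lemma lvlAt_add_lvlAt_rotate (a b : ℕ) (Q : List Bool) {m t : ℕ} (hm : m ≤ Q.length)
    (ht : t ≤ Q.length) :
    lvlAt a b Q m + lvlAt a b (Q.rotate m) t = lvlAt a b (Q ++ Q) (m + t) := by
  simp only [lvlAt_eq_pathLevel_take, List.take_add, pathLevel_append,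
    List.take_rotate_eq_take_drop_append_self Q hm ht, List.take_append_of_le_length hm]

lemma IsPath.lvlAt_rotate_s8 (hQ : IsPath a b Q) {m t : ℕ} (hm : m < Q.length)
    (ht : t ≤ Q.length) :
    lvlAt a b (Q.rotate m) t = lvlAt a b Q ((m + t) % Q.length) - lvlAt a b Q m := by
  rw [← hQ.lvlAt_append_self_eq_lvlAt_mod (by omega), ← lvlAt_add_lvlAt_rotate a b Q hm.le ht]
  ring

lemma lvlAt_eq_of_le_length (a b : ℕ) (Q : List Bool) {m : ℕ} (hm : m ≤ Q.length) :
    lvlAt a b Q m = (a + b) * (Q.take m).count true - b * m := by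
  have hcount := List.count_true_add_count_false (Q.take m)
  rw [List.length_take_of_le hm] at hcount
  have hcount' : ((Q.take m).count true + (Q.take m).count false : ℤ) = m := by
    exact_mod_cast hcount
  rw [lvlAt]
  linear_combination (-(b : ℤ)) * hcount'

lemma IsPath.injOn_lvlAt (hab : a.Coprime b) (hQ : IsPath a b Q) :
    Set.InjOn (lvlAt a b Q) (Set.Iio Q.length) := by
  intro m₁ hm₁ m₂ hm₂ heq
  rw [Set.mem_Iio] at hm₁ hm₂
  rw [lvlAt_eq_of_le_length a b Q hm₁.le, lvlAt_eq_of_le_length a b Q hm₂.le] at heq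
  have hmul : b * m₁ ≡ b * m₂ [MOD a + b] := by
    rw [Nat.modEq_iff_dvd]
    exact ⟨(Q.take m₂).count true - (Q.take m₁).count true, by push_cast; linarith⟩
  rw [hQ.length_eq_s8] at hm₁ hm₂
  exact (hmul.cancel_left_of_coprime (Nat.coprime_add_self_left.mpr hab)).eq_of_lt_of_lt hm₁ hm₂

end Levels

section Skeletal

variable {a b k : ℕ} {Q : List Bool}

lemma IsDyck.r1 (hQ : IsDyck a b Q) : R1 a b k Q :=
  fun m hm hN _ => hQ m hm hN

lemma IsPath.isDyck_rotate_of_forall_le (hQ : IsPath a b Q) {m : ℕ} (hm : m < Q.length)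
    (hmin : ∀ j < Q.length, lvlAt a b Q m ≤ lvlAt a b Q j) : IsDyck a b (Q.rotate m) := by
  intro t ht _
  rw [List.length_rotate] at ht
  rw [hQ.lvlAt_rotate_s8 hm ht.le, sub_nonneg]
  exact hmin _ (Nat.mod_lt _ (by omega))

lemma exists_add_mod_eq {n m j : ℕ} (hm : m < n) (hj : j < n) : ∃ t ≤ n, (m + t) % n = j :=
  ⟨(j + n - m) % n, (Nat.mod_lt _ (by omega)).le, by
    rw [Nat.add_mod_mod, show m + (j + n - m) = j + n by omega, Nat.add_mod_right,
      Nat.mod_eq_of_lt hj]⟩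

lemma List.rotate_rotate_mod {α : Type*} (l : List α) (m t : ℕ) :
    (l.rotate m).rotate t = l.rotate ((m + t) % l.length) := by
  rw [List.rotate_rotate, List.rotate_mod]

lemma IsPath.skeletalPath_rotate_iff (hQ : IsPath a b Q) {m : ℕ} (hm : m < Q.length) :
    SkeletalPath a b k (Q.rotate m) ↔ R1 a b k (Q.rotate m) ∧
      ∀ j < Q.length, R1 a b k (Q.rotate j) → lvlAt a b Q j ≤ lvlAt a b Q m := by
  refine and_congr_right fun _ => ⟨fun hR2 j hj hR1 => ?_, fun hmax t ht hpos hR1 => ?_⟩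
  · obtain ⟨t, ht, rfl⟩ := exists_add_mod_eq hm hj
    by_contra! hlt
    refine hR2 t (by rwa [List.length_rotate]) ?_ (by rwa [List.rotate_rotate_mod])
    rw [hQ.lvlAt_rotate_s8 hm ht]
    linarith
  · rw [List.length_rotate] at ht
    rw [hQ.lvlAt_rotate_s8 hm ht] at hpos
    have := hmax _ (Nat.mod_lt _ (by omega)) (by rwa [← List.rotate_rotate_mod])
    linarith

theorem IsPath.existsUnique_skeletalPath_rotate (k : ℕ) (hab : a.Coprime b)
    (hQ : IsPath a b Q) : ∃! m, m < Q.length ∧ SkeletalPath a b k (Q.rotate m) := by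
  classical
  have hlen : 0 < Q.length := by
    rw [hQ.length_eq_s8]
    by_contra! h
    obtain ⟨rfl, rfl⟩ : a = 0 ∧ b = 0 := by omega
    simp at hab
  obtain ⟨mlow, hmlow, hlow⟩ :=
    (Finset.range Q.length).exists_min_image (lvlAt a b Q) ⟨0, Finset.mem_range.mpr hlen⟩
  let S := (Finset.range Q.length).filter fun m => R1 a b k (Q.rotate m)
  have hS : S.Nonempty := ⟨mlow, Finset.mem_filter.mpr ⟨hmlow,
    (hQ.isDyck_rotate_of_forall_le (Finset.mem_range.mp hmlow)
      fun j hj => hlow j (Finset.mem_range.mpr hj)).r1⟩⟩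
  obtain ⟨m₀, hm₀S, hmax⟩ := S.exists_max_image (lvlAt a b Q) hS
  simp only [S, Finset.mem_filter, Finset.mem_range] at hm₀S hmax
  refine ⟨m₀, ⟨hm₀S.1, (hQ.skeletalPath_rotate_iff hm₀S.1).mpr
    ⟨hm₀S.2, fun j hj hR1 => hmax j ⟨hj, hR1⟩⟩⟩, fun m ⟨hm, hskel⟩ => ?_⟩
  obtain ⟨hR1, hle⟩ := (hQ.skeletalPath_rotate_iff hm).mp hskel
  exact hQ.injOn_lvlAt hab hm hm₀S.1
    (le_antisymm (hmax m ⟨hm, hR1⟩) (hle m₀ hm₀S.1 hm₀S.2))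

end Skeletal

section Labeled

variable {a b : ℕ} {L : List (Option (Fin b))}

lemma countP_isSome_eq_sum_count (L : List (Option (Fin b))) :
    L.countP (fun x => x.isSome) = ∑ i : Fin b, L.count (some i) := by
  induction L with
  | nil => simp
  | cons x xs ih =>
    cases x with
    | none => simpa [List.countP_cons, List.count_cons] using ih
    | some v => simp [List.count_cons, ih, Finset.sum_add_distrib]

lemma IsLabeled.isPath_unlabel (hL : IsLabeled a b L) : IsPath a b (unlabel L) := by
  simp only [IsPath, unlabel, List.count_eq_countP, List.countP_map]
  constructor
  · calc _ = L.countP (fun x => x.isSome) := List.countP_congr fun x _ => by cases x <;> simp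
      _ = b := by simp [countP_isSome_eq_sum_count, hL.2.1]
  · rw [← hL.1, List.count_eq_countP]
    exact List.countP_congr fun x _ => by cases x <;> simp

lemma unlabel_rotate (L : List (Option (Fin b))) (m : ℕ) :
    unlabel (L.rotate m) = (unlabel L).rotate m :=
  List.map_rotate _ _ _

lemma List.getD_rotate {α : Type*} (l : List α) (d : α) (m : ℕ) {t : ℕ} (ht : t < l.length) :
    (l.rotate m).getD t d = l.getD ((t + m) % l.length) d := by
  simp only [List.getD_eq_getElem?_getD, List.getElem?_rotate ht]

lemma IsLabeled.rotate (hL : IsLabeled a b L) (hlast : L.getLast? = some none) (m : ℕ) :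
    IsLabeled a b (L.rotate m) := by
  obtain ⟨hnone, hsome, hruns⟩ := hL
  refine ⟨(L.rotate_perm m).count_eq _ ▸ hnone,
    fun i => (L.rotate_perm m).count_eq _ ▸ hsome i, fun t i j hi hj => ?_⟩
  have ht : t + 1 < L.length := by
    by_contra! h
    rw [List.getD_eq_default _ _ (by rw [List.length_rotate]; omega)] at hj
    cases hj
  have hend : L.getD (L.length - 1) none = none := by
    rw [List.getD_eq_getElem?_getD, ← List.getLast?_eq_getElem?, hlast, Option.getD_some]
  rw [List.getD_rotate L none m (by omega)] at hi
  rw [List.getD_rotate L none m ht] at hj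
  have hp : (t + m) % L.length + 1 < L.length := by
    have := Nat.mod_lt (t + m) (show 0 < L.length by omega)
    by_contra! h
    rw [show (t + m) % L.length = L.length - 1 by omega, hend] at hi
    cases hi
  rw [show t + 1 + m = t + m + 1 by ring, ← Nat.mod_add_mod, Nat.mod_eq_of_lt hp] at hj
  exact hruns _ i j hi hj

end Labeled

theorem unique_skeletal_labeled_shift_general (a b k : ℕ)
    (hab : a.Coprime b) (L : List (Option (Fin b)))
    (hL : IsLabeled a b L) (hlast : L.getLast? = some none) :
    ∃! L' : List (Option (Fin b)),
      (∃ m ≤ L.length, L' = L.rotate m) ∧ IsLabeled a b L' ∧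
        SkeletalPath a b k (unlabel L') := by
  have hlen : (unlabel L).length = L.length := List.length_map _
  obtain ⟨m₀, ⟨hm₀, hskel₀⟩, huniq⟩ := hL.isPath_unlabel.existsUnique_skeletalPath_rotate k hab
  rw [hlen] at hm₀ huniq
  refine ⟨L.rotate m₀, ⟨⟨m₀, hm₀.le, rfl⟩, hL.rotate hlast m₀, by rwa [unlabel_rotate]⟩, ?_⟩
  rintro _ ⟨⟨m, -, rfl⟩, -, hskel⟩
  rw [unlabel_rotate, ← List.rotate_mod, hlen] at hskel
  rw [← List.rotate_mod, huniq _ ⟨Nat.mod_lt _ (by omega), hskel⟩]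

/-- every labeled path from `(0,0)` to `(a,b)` ending in an east
step has exactly one `k`-skeletal (run-preserving) cyclic shift. -/
theorem unique_skeletal_labeled_shift (a b k : ℕ) (ha : 0 < a) (hb : 0 < b)
    (hab : a.Coprime b) (hk : k < b) (L : List (Option (Fin b)))
    (hL : IsLabeled a b L) (hlast : L.getLast? = some none) :
    ∃! L' : List (Option (Fin b)),
      (∃ m ≤ L.length, L' = L.rotate m) ∧ IsLabeled a b L' ∧
        SkeletalPath a b k (unlabel L') :=
  unique_skeletal_labeled_shift_general a b k hab L hL hlast
end

section
/- Let a, b be coprime positive integers, fix k with 0 ≤ k < b, and let D be a chip configuration with D ≥ 0. Then D is k-stable if and only if for every s with 1 ≤ s ≤ min(k+1, b), the s-th largest value among D(1),…,D(b) is at most ⌊(b−s)·a/b⌋. Equivalently, D is k-stable if and only if the last k+1 north steps of lpath(D) start on or above the line b·x = a·y. -/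
/-- The cluster-fire move `φ_S` for the quantized rational model on the
complete graph (`c = 1`): each `i ∈ S` loses `1 + ⌊(b−s)·a/b⌋` chips and each
`j ∉ S` gains `⌊s·a/b⌋` chips, where `s = |S|`. -/
def cfire (a b : ℕ) (S : Finset (Fin b)) (D : Fin b → ℤ) : Fin b → ℤ :=
  fun i =>
    if i ∈ S then D i - 1 - (((b - S.card) * a / b : ℕ) : ℤ)
    else D i + ((S.card * a / b : ℕ) : ℤ)

/-- The borrow move `β_S = φ_S⁻¹`. -/
def cborrow (a b : ℕ) (S : Finset (Fin b)) (D : Fin b → ℤ) : Fin b → ℤ :=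
  fun i =>
    if i ∈ S then D i + 1 + (((b - S.card) * a / b : ℕ) : ℤ)
    else D i - ((S.card * a / b : ℕ) : ℤ)

/-- `D` is `k`-stable: `D ≥ 0` and no `k`-firing move `φ_S` (with
`0 < |S| ≤ k+1`) is legal on `D`. -/
def KStable (a b k : ℕ) (D : Fin b → ℤ) : Prop :=
  (∀ i, 0 ≤ D i) ∧ ∀ S : Finset (Fin b), S.Nonempty → S.card ≤ k + 1 →
    ¬ (∀ i, 0 ≤ cfire a b S D i)

/-- `D` is `k`-skeletal: `D` is `k`-stable and no legal nonempty borrow move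
produces a `k`-stable configuration. -/
def KSkeletal (a b k : ℕ) (D : Fin b → ℤ) : Prop :=
  KStable a b k D ∧ ∀ T : Finset (Fin b), T.Nonempty →
    (∀ i, 0 ≤ cborrow a b T D i) → ¬ KStable a b k (cborrow a b T D)

/-- `i` is poorer than `j` in configuration `D`. -/
def Poorer {b : ℕ} (D : Fin b → ℤ) (i j : Fin b) : Prop :=
  D i < D j ∨ (D i = D j ∧ i < j)

/-- `L` is the labeled path `lpath D`: a valid labeled path in which the north
step labeled `i` lies in column `D i`, i.e. is preceded by exactly `D i` east
steps.  (These conditions determine `L` uniquely.) -/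
def IsLpath (a b : ℕ) (D : Fin b → ℤ) (L : List (Option (Fin b))) : Prop :=
  IsLabeled a b L ∧
  ∀ m : ℕ, ∀ i : Fin b, L.getD m none = some i → ((L.take m).count none : ℤ) = D i


/-!
Only the members of `S` can go into debt under `φ_S`, so `φ_S` is illegal on `D ≥ 0` iff some
`i ∈ S` holds at most `⌊(b - |S|)·a/b⌋` chips; asking this of every `S` of size `s` says exactly
that the `s`-th largest chip count is at most `⌊(b - s)·a/b⌋`.

In `lpath D` the columns of the north steps weakly increase, so the north step followed by `t`
further north steps carries the `(t+1)`-st largest chip count `D i`: it starts at the point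
`(D i, b - t - 1)`, whose level `a·(b - t - 1) - b·D i` is nonnegative iff
`D i ≤ ⌊(b - (t+1))·a/b⌋`.
-/

open Finset

theorem Finset.exists_card_eq_forall_iff {ι : Type*} [Fintype ι] (p : ι → Prop)
    [DecidablePred p] (s : ℕ) :
    (∃ S : Finset ι, #S = s ∧ ∀ i ∈ S, p i) ↔ s ≤ #{i | p i} := by
  constructor
  · rintro ⟨S, rfl, hS⟩
    exact card_le_card fun i hi => mem_filter.2 ⟨mem_univ i, hS i hi⟩
  · intro h
    obtain ⟨S, hSp, rfl⟩ := exists_subset_card_eq h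
    exact ⟨S, rfl, fun i hi => (mem_filter.1 (hSp hi)).2⟩

theorem List.countP_ofFn {α : Type*} {n : ℕ} (f : Fin n → α) (p : α → Bool) :
    (List.ofFn f).countP p = #{i | p (f i)} := by
  have := (List.nodup_finRange n).card_eq_countP (P := fun i => p (f i))
  simpa [List.ofFn_eq_map, List.countP_map, Function.comp_def] using this.symm

theorem List.card_le_countP_isSome {α : Type*} [DecidableEq α] {M : List (Option α)}
    {T : Finset α} (hT : ∀ j ∈ T, some j ∈ M) : #T ≤ M.countP Option.isSome :=
  calc #T ≤ #M.reduceOption.toFinset :=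
        card_le_card fun j hj => List.mem_toFinset.2 (List.reduceOption_mem_iff.2 (hT j hj))
    _ ≤ M.reduceOption.length := List.toFinset_card_le _
    _ = M.countP Option.isSome := by
        rw [List.reduceOption_length_eq, List.countP_eq_length_filter]

theorem List.exists_getElem_countP_drop_eq {α : Type*} (p : α → Bool) :
    ∀ {l : List α} {t : ℕ}, t < l.countP p →
      ∃ m, ∃ h : m < l.length, p l[m] ∧ (l.drop (m + 1)).countP p = t
  | [], _, ht => by simp at ht
  | x :: l, t, ht => by
    by_cases hlt : t < l.countP p
    · obtain ⟨m, hm, hpm, hdrop⟩ := exists_getElem_countP_drop_eq p hlt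
      exact ⟨m + 1, by simpa using hm, hpm, hdrop⟩
    · rw [List.countP_cons] at ht
      split_ifs at ht with hx
      · exact ⟨0, Nat.succ_pos _, hx, by rw [List.drop_one, List.tail_cons]; omega⟩
      · omega

theorem List.Pairwise.apply_getElem_iff_lt_countP {α : Type*} {r : α → α → Prop}
    {p : α → Bool} {l : List α} (hl : l.Pairwise r) (hp : ∀ x y, r x y → p y → p x)
    {s : ℕ} (hs : s < l.length) : p l[s] ↔ s < l.countP p := by
  rw [List.pairwise_iff_getElem] at hl
  constructor
  · intro hps
    have htake : (l.take (s + 1)).countP p = s + 1 := by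
      rw [List.countP_eq_length.2, List.length_take, min_eq_left hs]
      intro x hx
      obtain ⟨j, hj, rfl⟩ := List.getElem_of_mem hx
      rw [List.length_take] at hj
      rw [List.getElem_take]
      rcases Nat.lt_or_ge j s with hjs | hjs
      · exact hp _ _ (hl j s _ hs hjs) hps
      · obtain rfl : j = s := by omega
        exact hps
    have := (List.take_sublist (s + 1) l).countP_le (p := p)
    omega
  · intro h
    by_contra hps
    have hdrop : (l.drop s).countP p = 0 := by
      rw [List.countP_eq_zero]
      intro x hx hpx
      obtain ⟨j, hj, rfl⟩ := List.getElem_of_mem hx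
      rw [List.getElem_drop] at hpx
      rcases Nat.eq_zero_or_pos j with rfl | hj0
      · exact hps hpx
      · exact hps (hp _ _ (hl s (s + j) hs _ (by omega)) hpx)
    rw [← List.take_append_drop s l, List.countP_append, hdrop] at h
    have := List.countP_le_length (l := l.take s) (p := p)
    have := List.length_take_le s l
    omega

section SortedDesc

variable {α : Type*} [LinearOrder α] {l : List α} {s : ℕ}

theorem List.Pairwise.lt_getElem_iff (hl : l.Pairwise (· ≥ ·)) (hs : s < l.length) (c : α) :
    c < l[s] ↔ s < l.countP (c < ·) := by
  simpa using hl.apply_getElem_iff_lt_countP (p := (c < ·))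
    (fun x y hxy hy => by simpa using lt_of_lt_of_le (by simpa using hy) hxy) hs

theorem List.Pairwise.le_getElem_iff (hl : l.Pairwise (· ≥ ·)) (hs : s < l.length) (c : α) :
    c ≤ l[s] ↔ s < l.countP (c ≤ ·) := by
  simpa using hl.apply_getElem_iff_lt_countP (p := (c ≤ ·))
    (fun x y hxy hy => by simpa using le_trans (by simpa using hy) hxy) hs

end SortedDesc

theorem Int.le_natCast_div_iff {b : ℕ} (hb : 0 < b) (n : ℕ) (x : ℤ) :
    x ≤ ((n / b : ℕ) : ℤ) ↔ b * x ≤ n := by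
  rw [Int.natCast_ediv, Int.le_ediv_iff_mul_le (by exact_mod_cast hb), mul_comm]

section Configuration

variable {a b k : ℕ} {D : Fin b → ℤ} {l : List ℤ}

theorem kStable_iff_forall_exists_le (hD : ∀ i, 0 ≤ D i) :
    KStable a b k D ↔ ∀ S : Finset (Fin b), S.Nonempty → #S ≤ k + 1 →
      ∃ i ∈ S, D i ≤ (((b - #S) * a / b : ℕ) : ℤ) := by
  refine ⟨fun h S hS hSk => ?_, fun h => ⟨hD, fun S hS hSk hfire => ?_⟩⟩
  · obtain ⟨i, hi⟩ := not_forall.1 (h.2 S hS hSk)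
    by_cases hiS : i ∈ S
    · refine ⟨i, hiS, ?_⟩
      simp only [cfire, hiS, if_true] at hi
      omega
    · simp only [cfire, hiS, if_false] at hi
      have := hD i
      have : (0 : ℤ) ≤ ((#S * a / b : ℕ) : ℤ) := Int.natCast_nonneg _
      omega
  · obtain ⟨i, hiS, hi⟩ := h S hS hSk
    have := hfire i
    simp only [cfire, hiS, if_true] at this
    omega

theorem getElem_le_iff_forall_card_eq (hperm : l.Perm (List.ofFn D))
    (hl : l.Pairwise (· ≥ ·)) {s : ℕ} (hs : s < l.length) (c : ℤ) :
    l[s] ≤ c ↔ ∀ S : Finset (Fin b), #S = s + 1 → ∃ i ∈ S, D i ≤ c := by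
  rw [← not_iff_not, not_le, hl.lt_getElem_iff hs, hperm.countP_eq, List.countP_ofFn]
  push Not
  rw [Finset.exists_card_eq_forall_iff]
  simp only [decide_eq_true_eq]
  omega

theorem kStable_iff_getD_le (hD : ∀ i, 0 ≤ D i) (hperm : l.Perm (List.ofFn D))
    (hl : l.Pairwise (· ≥ ·)) :
    KStable a b k D ↔ ∀ s : ℕ, 1 ≤ s → s ≤ min (k + 1) b →
      l.getD (s - 1) 0 ≤ (((b - s) * a / b : ℕ) : ℤ) := by
  have hlen : l.length = b := by rw [hperm.length_eq, List.length_ofFn]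
  rw [kStable_iff_forall_exists_le hD]
  constructor
  · intro h s hs1 hs2
    obtain ⟨t, rfl⟩ : ∃ t, s = t + 1 := ⟨s - 1, by omega⟩
    rw [Nat.add_sub_cancel, List.getD_eq_getElem _ _ (by omega),
      getElem_le_iff_forall_card_eq hperm hl]
    intro S hS
    have := h S (card_pos.1 (by omega)) (by omega)
    rwa [hS] at this
  · intro h S hS hSk
    have hSb : #S ≤ b := by simpa using card_le_univ S
    have hSpos := card_pos.2 hS
    have := h #S hSpos (by omega)
    rw [List.getD_eq_getElem _ _ (by omega), getElem_le_iff_forall_card_eq hperm hl] at this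
    exact this S (by omega)

end Configuration

theorem unlabel_count_true {b : ℕ} (M : List (Option (Fin b))) :
    (unlabel M).count true = M.countP Option.isSome := by
  simp [unlabel, List.count_eq_countP, List.countP_map, Function.comp_def]

theorem unlabel_count_false {b : ℕ} (M : List (Option (Fin b))) :
    (unlabel M).count false = M.count none := by
  simp [unlabel, List.count_eq_countP, List.countP_map, Function.comp_def]

namespace IsLpath

variable {a b k : ℕ} {D : Fin b → ℤ} {L : List (Option (Fin b))} {l : List ℤ}
  {m : ℕ} {i : Fin b}

theorem count_take_none (hL : IsLpath a b D L) (hm : m < L.length) (he : L[m] = some i) :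
    ((L.take m).count none : ℤ) = D i :=
  hL.2 m i (by rw [List.getD_eq_getElem _ _ hm, he])

theorem le_of_index_le (hL : IsLpath a b D L) {m' : ℕ} {j : Fin b} (hm : m < L.length)
    (hm' : m' < L.length) (he : L[m] = some i) (he' : L[m'] = some j) (hmm' : m ≤ m') :
    D i ≤ D j := by
  rw [← hL.count_take_none hm he, ← hL.count_take_none hm' he']
  have : (L.take m).Sublist (L.take m') := by
    simpa [List.take_take, min_eq_left hmm'] using List.take_sublist m (L.take m')
  exact_mod_cast this.count_le none

theorem exists_getElem_eq (hL : IsLpath a b D L) (j : Fin b) :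
    ∃ m', ∃ h : m' < L.length, L[m'] = some j :=
  List.getElem_of_mem (List.count_pos_iff.1 (by rw [hL.1.2.1 j]; norm_num))

theorem mem_drop_of_lt (hL : IsLpath a b D L) (hm : m < L.length) (he : L[m] = some i)
    {j : Fin b} (hij : D i < D j) : some j ∈ L.drop (m + 1) := by
  obtain ⟨m', hm', he'⟩ := hL.exists_getElem_eq j
  have hlt : m < m' := lt_of_not_ge fun h => (hL.le_of_index_le hm' hm he' he h).not_gt hij
  rw [List.mem_iff_getElem]
  refine ⟨m' - (m + 1), by rw [List.length_drop]; omega, ?_⟩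
  simp only [List.getElem_drop, Nat.add_sub_cancel' hlt, he']

theorem mem_take_of_lt (hL : IsLpath a b D L) (hm : m < L.length) (he : L[m] = some i)
    {j : Fin b} (hji : D j < D i) : some j ∈ L.take m := by
  obtain ⟨m', hm', he'⟩ := hL.exists_getElem_eq j
  have hlt : m' < m := lt_of_not_ge fun h => (hL.le_of_index_le hm hm' he he' h).not_gt hji
  rw [List.mem_iff_getElem]
  exact ⟨m', by rw [List.length_take]; omega, by rwa [List.getElem_take]⟩

theorem countP_isSome (hL : IsLpath a b D L) : L.countP Option.isSome = b := by
  have hcount (j : Fin b) : L.reduceOption.count j = 1 := by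
    rw [← hL.1.2.1 j, List.reduceOption, List.count_filterMap, List.count_eq_countP]
    rfl
  have hnodup : L.reduceOption.Nodup := List.nodup_iff_count_le_one.2 fun j => (hcount j).le
  have huniv : L.reduceOption.toFinset = univ := eq_univ_of_forall fun j =>
    List.mem_toFinset.2 (List.count_pos_iff.1 (by rw [hcount]; norm_num))
  calc L.countP Option.isSome = L.reduceOption.length := by
        rw [List.reduceOption_length_eq, List.countP_eq_length_filter]
    _ = #L.reduceOption.toFinset := (List.toFinset_card_of_nodup hnodup).symm
    _ = b := by rw [huniv, card_univ, Fintype.card_fin]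

theorem countP_isSome_take_add_drop (hL : IsLpath a b D L) (hm : m < L.length)
    (he : L[m] = some i) :
    (L.take m).countP Option.isSome + 1 + (L.drop (m + 1)).countP Option.isSome = b := by
  have h := hL.countP_isSome
  rw [← List.take_append_drop m L, List.countP_append, List.drop_eq_getElem_cons hm, he,
    List.countP_cons] at h
  simp only [Option.isSome_some, if_true] at h
  omega

theorem getD_countP_drop (hL : IsLpath a b D L) (hperm : l.Perm (List.ofFn D))
    (hl : l.Pairwise (· ≥ ·)) (hm : m < L.length) (he : L[m] = some i) :
    l.getD ((L.drop (m + 1)).countP Option.isSome) 0 = D i := by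
  have hsplit := hL.countP_isSome_take_add_drop hm he
  have hlen : l.length = b := by rw [hperm.length_eq, List.length_ofFn]
  rw [List.getD_eq_getElem _ _ (by omega)]
  apply le_antisymm
  · rw [← not_lt, hl.lt_getElem_iff, hperm.countP_eq, List.countP_ofFn, not_lt]
    simpa using List.card_le_countP_isSome fun j hj =>
      hL.mem_drop_of_lt hm he (by simpa using hj)
  · rw [hl.le_getElem_iff, hperm.countP_eq, List.countP_ofFn]
    have hpoor : #{j | D j < D i} ≤ (L.take m).countP Option.isSome :=
      List.card_le_countP_isSome fun j hj => hL.mem_take_of_lt hm he (by simpa using hj)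
    have := card_filter_add_card_filter_not (s := univ) (fun j => D i ≤ D j)
    simp only [not_le, card_univ, Fintype.card_fin] at this
    simp only [decide_eq_true_eq]
    omega

theorem lvlAt_nonneg_iff (hL : IsLpath a b D L) (hm : m < L.length) (he : L[m] = some i) :
    0 ≤ lvlAt a b (unlabel L) m ↔
      D i ≤ (((b - ((L.drop (m + 1)).countP Option.isSome + 1)) * a / b : ℕ) : ℤ) := by
  have hsplit := hL.countP_isSome_take_add_drop hm he
  rw [Int.le_natCast_div_iff (by omega), show b - ((L.drop (m + 1)).countP Option.isSome + 1) =
    (L.take m).countP Option.isSome by omega, lvlAt, unlabel, ← List.map_take,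
    ← unlabel, unlabel_count_true, unlabel_count_false, hL.count_take_none hm he]
  push_cast
  constructor <;> intro h <;> linarith

theorem r1_unlabel_iff_getD_le (hL : IsLpath a b D L) (hperm : l.Perm (List.ofFn D))
    (hl : l.Pairwise (· ≥ ·)) :
    R1 a b k (unlabel L) ↔ ∀ s : ℕ, 1 ≤ s → s ≤ min (k + 1) b →
      l.getD (s - 1) 0 ≤ (((b - s) * a / b : ℕ) : ℤ) := by
  have hafter (m : ℕ) : ((unlabel L).drop (m + 1)).count true =
      (L.drop (m + 1)).countP Option.isSome := by
    rw [unlabel, ← List.map_drop, ← unlabel, unlabel_count_true]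
  constructor
  · intro h s hs1 hs2
    obtain ⟨m, hm, hsome, hcount⟩ := List.exists_getElem_countP_drop_eq Option.isSome
      (l := L) (t := s - 1) (by rw [hL.countP_isSome]; omega)
    obtain ⟨i, he⟩ := Option.isSome_iff_exists.1 hsome
    have hlvl := h m (by simpa [unlabel] using hm)
      (by simp [unlabel, List.getElem?_eq_getElem hm, he]) (by rw [hafter, hcount]; omega)
    rw [hL.lvlAt_nonneg_iff hm he, hcount, Nat.sub_add_cancel hs1] at hlvl
    rwa [← hcount, hL.getD_countP_drop hperm hl hm he]
  · intro h m hm hnorth hk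
    rw [unlabel, List.length_map] at hm
    obtain ⟨i, he⟩ : ∃ i, L[m] = some i :=
      Option.isSome_iff_exists.1 (by simpa [unlabel, hm] using hnorth)
    have hsplit := hL.countP_isSome_take_add_drop hm he
    rw [hafter] at hk
    rw [hL.lvlAt_nonneg_iff hm he, ← hL.getD_countP_drop hperm hl hm he]
    simpa using h _ (Nat.le_add_left 1 _) (by omega)

end IsLpath

theorem kStable_iff_general (a b k : ℕ) (D : Fin b → ℤ) (hD : ∀ i, 0 ≤ D i) :
    (KStable a b k D ↔
      ∀ l : List ℤ, l.Perm (List.ofFn D) → l.Pairwise (· ≥ ·) →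
        ∀ s : ℕ, 1 ≤ s → s ≤ min (k + 1) b →
          l.getD (s - 1) 0 ≤ (((b - s) * a / b : ℕ) : ℤ)) ∧
    (∀ L : List (Option (Fin b)), IsLpath a b D L →
      (KStable a b k D ↔ R1 a b k (unlabel L))) := by
  have hperm := List.mergeSort_perm (List.ofFn D) fun x y => decide (x ≥ y)
  have hsorted := List.pairwise_mergeSort' (· ≥ ·) (List.ofFn D)
  refine ⟨⟨fun h l hl hls => (kStable_iff_getD_le hD hl hls).1 h,
    fun h => (kStable_iff_getD_le hD hperm hsorted).2 (h _ hperm hsorted)⟩, fun L hL => ?_⟩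
  rw [kStable_iff_getD_le hD hperm hsorted, hL.r1_unlabel_iff_getD_le hperm hsorted]

/-- `D ≥ 0` is `k`-stable iff for every `1 ≤ s ≤ min(k+1,b)` the
`s`-th largest chip count is at most `⌊(b−s)·a/b⌋`; equivalently, iff the last
`k+1` north steps of `lpath D` start on or above the line `b·x = a·y`. -/
theorem kStable_iff (a b k : ℕ) (ha : 0 < a) (hb : 0 < b) (hab : a.Coprime b)
    (hk : k < b) (D : Fin b → ℤ) (hD : ∀ i, 0 ≤ D i) :
    (KStable a b k D ↔
      ∀ l : List ℤ, l.Perm (List.ofFn D) → l.Pairwise (· ≥ ·) →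
        ∀ s : ℕ, 1 ≤ s → s ≤ min (k + 1) b →
          l.getD (s - 1) 0 ≤ (((b - s) * a / b : ℕ) : ℤ)) ∧
    (∀ L : List (Option (Fin b)), IsLpath a b D L →
      (KStable a b k D ↔ R1 a b k (unlabel L))) :=
  kStable_iff_general a b k D hD
end

section
/- Let a, b be coprime positive integers. Suppose the chip configuration D is 0-stable and the labeled path Q = lpath(D) arrives at the min-level point v_s (for some 1 ≤ s ≤ b) by an east step. Let S be the set of the s poorest vertices in D. Then the borrow move β_S is legal on D (i.e., β_S(D) ≥ 0), and the cyclic shift Q_{v_s} equals lpath(β_S(D)). -/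
/-- The min-level points: `v_s = (⌊s·a/b⌋, s)` for `1 ≤ s ≤ b−1` and
`v_b = (a−1, b)`. -/
def minLvlPt (a b s : ℕ) : ℕ × ℕ :=
  if s = b then (a - 1, b) else (s * a / b, s)

/-- The path `Q` arrives at the min-level point `v_s` by an east step, the
point `v_s` being reached after the first `m` steps of `Q`. -/
def ArrivesByEast (a b : ℕ) (Q : List Bool) (s m : ℕ) : Prop :=
  0 < m ∧ m ≤ Q.length ∧ Q.getD (m - 1) true = false ∧
    ((Q.take m).count false, (Q.take m).count true) = minLvlPt a b s

/-!
Cut `lpath D = P ++ R` at `v_s`, and let `x` be the number of east steps of `P`. As `P` ends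
with an east step, the north steps of `P` lie in columns `< x` and those of `R` in columns
`≥ x`; `P` has `s` north steps, so their labels are exactly the `s` poorest vertices `S`.
Borrowing by `S` adds `1 + ⌊(b-s)a/b⌋` chips to each vertex of `S`, which is `a - x` because
`a` and `b` are coprime, and removes `⌊sa/b⌋ = x` from the others: this is exactly how the
columns move under the rotation `R ++ P`. Since `D < a` by `0`-stability, the path ends with
an east step, so the rotation still has increasing labels along each run of north steps.
-/

namespace List

variable {α : Type*}

theorem lt_length_of_getD_eq_some {l : List (Option α)} {m : ℕ} {i : α}
    (h : l.getD m none = some i) : m < l.length := by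
  by_contra hm
  rw [getD_eq_default _ _ (not_lt.mp hm)] at h
  exact nomatch h

theorem mem_iff_exists_getD_eq_some {l : List (Option α)} {i : α} :
    some i ∈ l ↔ ∃ m, l.getD m none = some i := by
  rw [mem_iff_getElem]
  constructor
  · rintro ⟨m, hm, he⟩
    exact ⟨m, by rw [getD_eq_getElem _ _ hm, he]⟩
  · rintro ⟨m, he⟩
    have hm := lt_length_of_getD_eq_some he
    exact ⟨m, hm, by rwa [← getD_eq_getElem _ none hm]⟩

theorem isChain_iff_getD [LT α] {l : List (Option α)} :
    l.IsChain (fun o o' => ∀ i ∈ o, ∀ j ∈ o', i < j) ↔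
      ∀ m i j, l.getD m none = some i → l.getD (m + 1) none = some j → i < j := by
  rw [isChain_iff_getElem]
  constructor
  · intro h m i j hi hj
    have hm := lt_length_of_getD_eq_some hj
    rw [getD_eq_getElem _ _ (by omega)] at hi
    rw [getD_eq_getElem _ _ hm] at hj
    exact h m hm i hi j hj
  · intro h m hm i hi j hj
    exact h m i j (by rw [getD_eq_getElem _ _ (by omega)]; exact hi)
      (by rw [getD_eq_getElem _ _ hm]; exact hj)

theorem count_reduceOption [DecidableEq α] (l : List (Option α)) (i : α) :
    l.reduceOption.count i = l.count (some i) := by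
  rw [reduceOption, count_filterMap, count_eq_countP]
  simp

theorem mem_right_iff_of_count_append_eq_one [BEq α] [LawfulBEq α] {l₁ l₂ : List α} {x : α}
    (h : (l₁ ++ l₂).count x = 1) : x ∈ l₂ ↔ x ∉ l₁ := by
  rw [count_append] at h
  rw [← count_pos_iff, ← count_pos_iff]
  omega

end List

theorem Finset.eq_of_card_eq_of_lt_iff {ι : Type*} {S T : Finset ι} {D : ι → ℤ} {x : ℤ}
    (hcard : S.card = T.card) (hS : ∀ i ∈ S, ∀ j ∉ S, D i ≤ D j)
    (hT : ∀ i, i ∈ T ↔ D i < x) : S = T := by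
  have hST : S ⊆ T := by
    intro i hi
    by_contra hiT
    obtain ⟨j, hjT, hjS⟩ : ∃ j ∈ T, j ∉ S := by
      by_contra! hTS
      exact hiT (Finset.eq_of_subset_of_card_le hTS hcard.le ▸ hi)
    have := hS i hi j hjS
    rw [hT] at hiT hjT
    omega
  exact Finset.eq_of_subset_of_card_le hST hcard.ge

theorem Nat.div_add_sub_mul_div_add_one {a b s : ℕ} (hab : a.Coprime b) (hs : 0 < s)
    (hsb : s < b) : s * a / b + (b - s) * a / b + 1 = a := by
  have hb : 0 < b := by omega
  have hsum : s * a + (b - s) * a = b * a := by rw [← Nat.add_mul, Nat.add_sub_cancel' hsb.le]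
  have hndvd : ¬ b ∣ s * a := fun h => by
    have := Nat.le_of_dvd hs (hab.symm.dvd_of_dvd_mul_right h)
    omega
  -- the two remainders are nonzero and sum to a multiple of `b`, hence to `b`
  have hcarry : b ≤ s * a % b + (b - s) * a % b := by
    by_contra! hlt
    have := Nat.add_mod (s * a) ((b - s) * a) b
    rw [Nat.mod_eq_of_lt hlt, hsum, Nat.mul_mod_right] at this
    exact hndvd (Nat.dvd_of_mod_eq_zero (by omega))
  have := Nat.add_div (a := s * a) (b := (b - s) * a) hb
  rw [hsum, if_pos hcarry, Nat.mul_div_cancel_left a hb] at this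
  omega

section Columns

variable {α : Type*} [DecidableEq α]

/-- `IsLpath a b D L` unfolds to `IsLabeled a b L ∧ HasColumns D L`. -/
def HasColumns (f : α → ℤ) (l : List (Option α)) : Prop :=
  ∀ m i, l.getD m none = some i → ((l.take m).count none : ℤ) = f i

variable {f g : α → ℤ} {l l₁ l₂ : List (Option α)} {i : α}

theorem HasColumns.congr (h : HasColumns f l) (hfg : ∀ i, some i ∈ l → f i = g i) :
    HasColumns g l :=
  fun m i hm => (h m i hm).trans (hfg i (List.mem_iff_exists_getD_eq_some.mpr ⟨m, hm⟩))

theorem hasColumns_append :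
    HasColumns f (l₁ ++ l₂) ↔
      HasColumns f l₁ ∧ HasColumns (fun i => f i - l₁.count none) l₂ := by
  constructor
  · intro h
    refine ⟨fun m i hm => ?_, fun m i hm => ?_⟩
    · have hlt := List.lt_length_of_getD_eq_some hm
      have := h m i (by rwa [List.getD_append _ _ _ _ hlt])
      rwa [List.take_append_of_le_length hlt.le] at this
    · have := h (l₁.length + m) i
        (by rwa [List.getD_append_right _ _ _ _ (by omega), Nat.add_sub_cancel_left])
      rw [List.take_length_add_append, List.count_append] at this
      push_cast at this
      linarith
  · rintro ⟨h₁, h₂⟩ m i hm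
    rcases lt_or_ge m l₁.length with hlt | hge
    · rw [List.getD_append _ _ _ _ hlt] at hm
      rw [List.take_append_of_le_length hlt.le]
      exact h₁ m i hm
    · rw [List.getD_append_right _ _ _ _ hge] at hm
      have := h₂ _ i hm
      rw [List.take_append, List.take_of_length_le hge, List.count_append]
      push_cast
      linarith

theorem HasColumns.mem_bounds (h : HasColumns f l) (hi : some i ∈ l) :
    0 ≤ f i ∧ f i ≤ l.count none := by
  obtain ⟨m, hm⟩ := List.mem_iff_exists_getD_eq_some.mp hi
  rw [← h m i hm]
  exact ⟨by positivity, by exact_mod_cast (List.take_sublist m l).count_le none⟩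

theorem HasColumns.lt_count_none (h : HasColumns f l) (hl : l.getLast? = some none)
    (hi : some i ∈ l) : f i < l.count none := by
  obtain ⟨l', rfl⟩ := List.getLast?_eq_some_iff.mp hl
  have hi' : some i ∈ l' := by simpa using hi
  have := ((hasColumns_append.mp h).1.mem_bounds hi').2
  simp only [List.count_append, List.count_singleton_self]
  push_cast
  linarith

theorem HasColumns.getLast?_eq_none (h : HasColumns f l) (hf : ∀ i, f i < l.count none) :
    ∀ o ∈ l.getLast?, o = none := by
  rintro (_ | i) hl
  · rfl
  obtain ⟨l', rfl⟩ := List.getLast?_eq_some_iff.mp hl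
  have := (hasColumns_append.mp h).2 0 i rfl
  have hi := hf i
  simp only [List.count_append] at hi this
  simp at hi this
  linarith

end Columns

section LatticePath

variable {a b : ℕ}

theorem count_false_unlabel (l : List (Option (Fin b))) :
    (unlabel l).count false = l.count none := by
  induction l with
  | nil => rfl
  | cons o l ih => cases o <;> simp_all [unlabel]

theorem count_true_unlabel (l : List (Option (Fin b))) :
    (unlabel l).count true = l.reduceOption.length := by
  induction l with
  | nil => rfl
  | cons o l ih => cases o <;> simp_all [unlabel, List.reduceOption_cons_of_some,
      List.reduceOption_cons_of_none]

theorem ArrivesByEast.exists_append {s m : ℕ} {L : List (Option (Fin b))}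
    (h : ArrivesByEast a b (unlabel L) s m) :
    ∃ P R, L = P ++ R ∧ m = P.length ∧ P.getLast? = some none ∧
      P.count none = (minLvlPt a b s).1 ∧ P.reduceOption.length = s := by
  obtain ⟨hm0, hmlen, hlast, hpt⟩ := h
  simp only [unlabel, List.length_map] at hmlen
  rw [unlabel, ← List.map_take, Prod.ext_iff] at hpt
  refine ⟨L.take m, L.drop m, (List.take_append_drop m L).symm, by simp [hmlen], ?_, ?_, ?_⟩
  · have hm : m - 1 < L.length := by omega
    rw [unlabel, List.getD_eq_getElem _ _ (by simpa using hm), List.getElem_map,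
      Option.isSome_eq_false_iff, Option.isNone_iff_eq_none] at hlast
    rw [List.getLast?_eq_getElem?, List.length_take, min_eq_left hmlen, List.getElem?_take,
      if_pos (by omega), List.getElem?_eq_getElem hm, hlast]
  · exact (count_false_unlabel _).symm.trans hpt.1
  · rw [← count_true_unlabel]
    refine hpt.2.trans ?_
    unfold minLvlPt
    split_ifs <;> simp_all

theorem IsLabeled.append_comm {P R : List (Option (Fin b))} (h : IsLabeled a b (P ++ R))
    (hlast : ∀ o ∈ (P ++ R).getLast?, o = none) : IsLabeled a b (R ++ P) := by
  obtain ⟨hnone, hsome, hchain⟩ := h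
  refine ⟨by rwa [List.count_append, add_comm, ← List.count_append],
    fun i => by rw [List.count_append, add_comm, ← List.count_append, hsome], ?_⟩
  rw [← List.isChain_iff_getD, List.isChain_append] at hchain ⊢
  refine ⟨hchain.2.1, hchain.1, fun o ho _ _ i hi => ?_⟩
  rw [hlast o (List.mem_getLast?_append_of_mem_getLast? ho)] at hi
  exact nomatch hi

theorem Poorer.le {D : Fin b → ℤ} {i j : Fin b} (h : Poorer D i j) : D i ≤ D j :=
  h.elim le_of_lt fun h => h.1.le

theorem KStable.lt_of_zero {D : Fin b → ℤ} (h : KStable a b 0 D) (ha : 0 < a) (i : Fin b) :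
    D i < a := by
  obtain ⟨j, hj⟩ := not_forall.mp (h.2 {i} (Finset.singleton_nonempty i) (by simp))
  simp only [cfire, Finset.card_singleton, Finset.mem_singleton, not_le] at hj
  rcases eq_or_ne j i with rfl | hji
  · have : (b - 1) * a / b < a :=
      Nat.div_lt_of_lt_mul (Nat.mul_lt_mul_of_pos_right (Nat.sub_lt j.pos one_pos) ha)
    rw [if_pos rfl] at hj
    omega
  · rw [if_neg hji] at hj
    linarith [h.1 j, Int.natCast_nonneg (1 * a / b)]

theorem minLvlPt_fst_add {s : ℕ} (ha : 0 < a) (hab : a.Coprime b) (hs : 0 < s) (hsb : s ≤ b) :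
    (minLvlPt a b s).1 + (b - s) * a / b + 1 = a := by
  unfold minLvlPt
  split_ifs with h
  · simp [h]
    omega
  · exact Nat.div_add_sub_mul_div_add_one hab hs (lt_of_le_of_ne hsb h)

theorem mem_poorest_iff_mem_prefix {D : Fin b → ℤ} {P R : List (Option (Fin b))}
    {S : Finset (Fin b)} (hone : ∀ i, (P ++ R).count (some i) = 1) (hcol : HasColumns D (P ++ R))
    (hlast : P.getLast? = some none) (hcard : S.card = P.reduceOption.length)
    (hpoor : ∀ i ∈ S, ∀ j ∉ S, D i ≤ D j) (i : Fin b) : i ∈ S ↔ some i ∈ P := by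
  obtain ⟨hcolP, hcolR⟩ := hasColumns_append.mp hcol
  have hnodup : P.reduceOption.Nodup := List.nodup_iff_count.mpr fun j => by
    have := hone j
    rw [List.count_append] at this
    rw [List.count_reduceOption]
    omega
  have hS : S = P.reduceOption.toFinset := by
    refine Finset.eq_of_card_eq_of_lt_iff (x := P.count none)
      (by rw [List.toFinset_card_of_nodup hnodup, hcard]) hpoor fun j => ?_
    rw [List.mem_toFinset, List.reduceOption_mem_iff]
    refine ⟨hcolP.lt_count_none hlast, fun hlt => ?_⟩
    by_contra hj
    have := (hcolR.mem_bounds ((List.mem_right_iff_of_count_append_eq_one (hone j)).mpr hj)).1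
    omega
  rw [hS, List.mem_toFinset, List.reduceOption_mem_iff]

end LatticePath

theorem borrow_is_cyclic_shift_general (a b : ℕ) (hab : a.Coprime b) (D : Fin b → ℤ) (h0 : KStable a b 0 D)
    (L : List (Option (Fin b))) (hL : IsLpath a b D L)
    (s m : ℕ) (hs : 1 ≤ s) (hsb : s ≤ b)
    (harr : ArrivesByEast a b (unlabel L) s m)
    (S : Finset (Fin b)) (hcard : S.card = s)
    (hpoor : ∀ i ∈ S, ∀ j ∉ S, Poorer D i j) :
    (∀ i, 0 ≤ cborrow a b S D i) ∧ IsLpath a b (cborrow a b S D) (L.rotate m) := by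
  obtain ⟨P, R, rfl, rfl, hlast, heast, hnorth⟩ := harr.exists_append
  obtain ⟨hlab, hcol : HasColumns D (P ++ R)⟩ := hL
  obtain ⟨hcolP, hcolR⟩ := hasColumns_append.mp hcol
  have hcount : P.count none + R.count none = a := by rw [← List.count_append, hlab.1]
  have ha : 0 < a := by
    have := List.count_pos_iff.mpr (List.mem_of_getLast? hlast)
    omega
  have hmemR (i : Fin b) : some i ∈ R ↔ some i ∉ P :=
    List.mem_right_iff_of_count_append_eq_one (hlab.2.1 i)
  have hmemS := mem_poorest_iff_mem_prefix hlab.2.1 hcol hlast (hcard.trans hnorth.symm)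
    fun i hi j hj => (hpoor i hi j hj).le
  have hborrowP : ∀ i ∈ S, cborrow a b S D i = D i + R.count none := by
    intro i hi
    have := minLvlPt_fst_add ha hab hs hsb
    simp only [cborrow, if_pos hi, hcard]
    omega
  have hborrowR : ∀ i ∉ S, cborrow a b S D i = D i - P.count none := by
    intro i hi
    have hsb' : s ≠ b := fun h =>
      hi (S.eq_univ_of_card (by simp [hcard, h]) ▸ Finset.mem_univ i)
    simp only [cborrow, if_neg hi, hcard, heast, minLvlPt, if_neg hsb']
  rw [List.rotate_append_length_eq]
  have hend := hcol.getLast?_eq_none fun i => hlab.1 ▸ h0.lt_of_zero ha i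
  refine ⟨fun i => ?_, hlab.append_comm hend,
    hasColumns_append.mpr ⟨hcolR.congr fun i hi => ?_, hcolP.congr fun i hi => ?_⟩⟩
  · by_cases hi : i ∈ S
    · rw [hborrowP i hi]
      linarith [h0.1 i, Int.natCast_nonneg (R.count none)]
    · rw [hborrowR i hi]
      exact (hcolR.mem_bounds ((hmemR i).mpr (by rwa [← hmemS]))).1
  · rw [hborrowR i (by rwa [hmemS, ← hmemR])]
  · rw [hborrowP i ((hmemS i).mpr hi)]
    ring

/-- if `D` is `0`-stable and `Q = lpath D` arrives at the
min-level point `v_s` by an east step, then the set `S` of the `s` poorest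
vertices can legally borrow, and `Q_{v_s} = lpath (β_S D)`. -/
theorem borrow_is_cyclic_shift (a b : ℕ) (ha : 0 < a) (hb : 0 < b)
    (hab : a.Coprime b) (D : Fin b → ℤ) (h0 : KStable a b 0 D)
    (L : List (Option (Fin b))) (hL : IsLpath a b D L)
    (s m : ℕ) (hs : 1 ≤ s) (hsb : s ≤ b)
    (harr : ArrivesByEast a b (unlabel L) s m)
    (S : Finset (Fin b)) (hcard : S.card = s)
    (hpoor : ∀ i ∈ S, ∀ j ∉ S, Poorer D i j) :
    (∀ i, 0 ≤ cborrow a b S D i) ∧ IsLpath a b (cborrow a b S D) (L.rotate m) :=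
  borrow_is_cyclic_shift_general a b hab D h0 L hL s m hs hsb harr S hcard hpoor
end
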